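/- arXiv:0711.2885 — 3 statements merged into one kernel-verified Lean document; each statement's English description precedes it below -/
import Mathlib

section
/- Let H be a complex Hilbert space and let T¹ = {T¹_t}_{t≥0} and T² = {T²_t}_{t≥0} be two semigroups of contraction operators on H, each continuous in the strong operator topology, such that T¹_s T²_t = T²_t T¹_s for all s,t ≥ 0. For i = 1,2 define φ^i_t(a) = T^i_t a (T^i_t)* for a ∈ B(H). Then for every s,t ≥ 0, the CP maps φ¹_s and φ²_t on B(H) commute strongly. -/
/-!
With `Θ = S (·) S*` and `Φ = T (·) T*`, the assignments `a ⊗ b ⊗ h ↦ a T* b S* h` and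
`a ⊗ b ⊗ h ↦ a S* b T* h` realize `B(H) ⊗_Φ B(H) ⊗_Θ H` and `B(H) ⊗_Θ B(H) ⊗_Φ H` inside `H`
itself. Since `B(H)` acts irreducibly on `H`, the vectors `a X b Y h` exhaust `H` when
`X, Y ≠ 0` and are all `0` otherwise, so both images span the same closed subspace, and the
identity of that subspace is the required unitary: condition (i) holds because `S*` and `T*`
commute, (ii) and (iii) because `c` acts on the left and `d ∈ B(H)′` commutes with all of
`B(H)`.
-/

/- STATEMENT 5: two commuting, strongly continuous semigroups of contractions on a
Hilbert space `H` give rise, by conjugation, to CP-semigroups `φ¹, φ²` on `B(H)`, and for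
all `s,t ≥ 0` the CP maps `φ¹_s` and `φ²_t` commute strongly. -/

open scoped InnerProductSpace ComplexOrder

universe u

/-- `StronglyCommuteOn M Θ Φ` says that the maps `Θ` and `Φ` (defined at least on the
von Neumann algebra `M ⊆ B(H)`) commute strongly: there is a unitary
`u : M ⊗_Φ M ⊗_Θ H → M ⊗_Θ M ⊗_Φ H` satisfying conditions (i)–(iii).
The Hilbert space `M ⊗_Φ M ⊗_Θ H` (the Hausdorff completion of the algebraic tensor product
with respect to the semi-inner product
`⟨a ⊗ b ⊗ h, c ⊗ d ⊗ k⟩ = ⟨h, Θ(b* Φ(a* c) d) k⟩`) is axiomatized as a Hilbert space `W₁`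
together with a map `ι₁ : M × M × H → W₁` whose range spans a dense subspace and which
realizes the prescribed inner products; similarly for `W₂ = M ⊗_Θ M ⊗_Φ H`.  The operators
`c ⊗ I ⊗ I` (for `c ∈ M`) and `I ⊗ I ⊗ d` (for `d ∈ M′ = Set.centralizer M`) on
`M ⊗_Θ M ⊗_Φ H` are the unique bounded operators `L c` and `Rop d` acting in the natural
way on simple tensors. -/
def StronglyCommuteOn {H : Type u} [NormedAddCommGroup H] [InnerProductSpace ℂ H]
    [CompleteSpace H]
    (M : Set (H →L[ℂ] H)) (Θ Φ : (H →L[ℂ] H) → (H →L[ℂ] H)) : Prop :=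
  ∃ (W₁ : Type u) (_ : NormedAddCommGroup W₁) (_ : InnerProductSpace ℂ W₁) (_ : CompleteSpace W₁)
    (W₂ : Type u) (_ : NormedAddCommGroup W₂) (_ : InnerProductSpace ℂ W₂) (_ : CompleteSpace W₂)
    (ι₁ : (H →L[ℂ] H) → (H →L[ℂ] H) → H → W₁)
    (ι₂ : (H →L[ℂ] H) → (H →L[ℂ] H) → H → W₂)
    (u : W₁ ≃ₗᵢ[ℂ] W₂)
    (L : (H →L[ℂ] H) → (W₂ →L[ℂ] W₂))
    (Rop : (H →L[ℂ] H) → (W₂ →L[ℂ] W₂)),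
    (∀ a ∈ M, ∀ b ∈ M, ∀ c ∈ M, ∀ d ∈ M, ∀ (h k : H),
        ⟪ι₁ a b h, ι₁ c d k⟫_ℂ = ⟪h, (Θ (star b * Φ (star a * c) * d)) k⟫_ℂ) ∧
    (∀ a ∈ M, ∀ b ∈ M, ∀ c ∈ M, ∀ d ∈ M, ∀ (h k : H),
        ⟪ι₂ a b h, ι₂ c d k⟫_ℂ = ⟪h, (Φ (star b * Θ (star a * c) * d)) k⟫_ℂ) ∧
    Dense (Submodule.span ℂ {w : W₁ | ∃ a ∈ M, ∃ b ∈ M, ∃ h : H, w = ι₁ a b h} : Set W₁) ∧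
    Dense (Submodule.span ℂ {w : W₂ | ∃ a ∈ M, ∃ b ∈ M, ∃ h : H, w = ι₂ a b h} : Set W₂) ∧
    (∀ a ∈ M, ∀ h : H, u (ι₁ a 1 h) = ι₂ a 1 h) ∧
    (∀ c ∈ M, ∀ a ∈ M, ∀ b ∈ M, ∀ h : H, L c (ι₂ a b h) = ι₂ (c * a) b h) ∧
    (∀ c ∈ M, ∀ a ∈ M, ∀ b ∈ M, ∀ h : H, u (ι₁ (c * a) b h) = L c (u (ι₁ a b h))) ∧
    (∀ d ∈ Set.centralizer M, ∀ a ∈ M, ∀ b ∈ M, ∀ h : H, Rop d (ι₂ a b h) = ι₂ a b (d h)) ∧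
    (∀ d ∈ Set.centralizer M, ∀ a ∈ M, ∀ b ∈ M, ∀ h : H, u (ι₁ a b (d h)) = Rop d (u (ι₁ a b h)))

open Submodule

namespace ContinuousLinearMap

section Semiring

variable {R V : Type*} [Semiring R] [AddCommMonoid V] [TopologicalSpace V] [Module R V]

def sandwichSet (X Y : V →L[R] V) : Set V := {x | ∃ a b v, (a * X * b * Y) v = x}

theorem sandwichSet_eq_zero {X Y : V →L[R] V} (h : X = 0 ∨ Y = 0) : sandwichSet X Y = {0} := by
  ext w
  constructor
  · rintro ⟨a, b, v, rfl⟩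
    rcases h with rfl | rfl <;> simp
  · rintro rfl
    exact ⟨0, 0, 0, by simp⟩

theorem apply_mem_span_sandwichSet {X Y : V →L[R] V} (c : V →L[R] V) {x : V}
    (hx : x ∈ span R (sandwichSet X Y)) : c x ∈ span R (sandwichSet X Y) := by
  refine (span_le (p := (span R _).comap (c : V →ₗ[R] V))).2 ?_ hx
  rintro _ ⟨a, b, v, rfl⟩
  exact subset_span ⟨c * a, b, v, rfl⟩

theorem dense_span_of_eq_span_sandwichSet {X Y : V →L[R] V} {p : Submodule R V}
    (hp : p = span R (sandwichSet X Y)) (ι : (V →L[R] V) → (V →L[R] V) → V → p)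
    (hι : ∀ a b v, (ι a b v : V) = (a * X * b * Y) v) :
    Dense (span R {w | ∃ a b v, w = ι a b v} : Set p) := by
  subst hp
  have hset : {w | ∃ a b v, w = ι a b v} = ((↑) : _ → V) ⁻¹' sandwichSet X Y := by
    ext w
    constructor
    · rintro ⟨a, b, v, rfl⟩
      exact ⟨a, b, v, (hι a b v).symm⟩
    · rintro ⟨a, b, v, hw⟩
      exact ⟨a, b, v, Subtype.ext (hw.symm.trans (hι a b v).symm)⟩
  rw [hset, span_span_coe_preimage, top_coe]
  exact dense_univ

end Semiring

section SeparatingDual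

variable {R V : Type*} [Field R] [TopologicalSpace R] [IsTopologicalRing R] [AddCommGroup V]
  [TopologicalSpace V] [Module R V] [ContinuousSMul R V] [SeparatingDual R V]

theorem exists_apply_eq_of_ne_zero {x : V} (hx : x ≠ 0) (y : V) :
    ∃ c : V →L[R] V, c x = y := by
  obtain ⟨f, hf⟩ := SeparatingDual.exists_eq_one (R := R) hx
  exact ⟨f.smulRight y, by simp [hf]⟩

theorem sandwichSet_eq_univ {X Y : V →L[R] V} (hX : X ≠ 0) (hY : Y ≠ 0) :
    sandwichSet X Y = Set.univ := by
  refine Set.eq_univ_of_forall fun w => ?_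
  obtain ⟨v, hv⟩ : ∃ v, Y v ≠ 0 := by simpa [ContinuousLinearMap.ext_iff] using hY
  obtain ⟨x, hx⟩ : ∃ x, X x ≠ 0 := by simpa [ContinuousLinearMap.ext_iff] using hX
  obtain ⟨b, hb⟩ := exists_apply_eq_of_ne_zero (R := R) hv x
  obtain ⟨a, ha⟩ := exists_apply_eq_of_ne_zero (R := R) hx w
  exact ⟨a, b, v, by simp [hb, ha]⟩

theorem sandwichSet_comm (X Y : V →L[R] V) : sandwichSet X Y = sandwichSet Y X := by
  by_cases h : X = 0 ∨ Y = 0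
  · rw [sandwichSet_eq_zero h, sandwichSet_eq_zero h.symm]
  · push Not at h
    rw [sandwichSet_eq_univ h.1 h.2, sandwichSet_eq_univ h.2 h.1]

theorem isClosed_span_sandwichSet [T1Space V] (X Y : V →L[R] V) :
    IsClosed (span R (sandwichSet X Y) : Set V) := by
  by_cases h : X = 0 ∨ Y = 0
  · rw [sandwichSet_eq_zero h, span_singleton_eq_bot.2 rfl, bot_coe]
    exact isClosed_singleton
  · push Not at h
    rw [sandwichSet_eq_univ h.1 h.2, span_univ, top_coe]
    exact isClosed_univ

end SeparatingDual

section Hilbert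

variable {H : Type*} [NormedAddCommGroup H] [InnerProductSpace ℂ H] [CompleteSpace H]

theorem inner_mul_star_mul_star_apply (S T a b c d : H →L[ℂ] H) (h k : H) :
    ⟪(a * star T * b * star S) h, (c * star T * d * star S) k⟫_ℂ =
      ⟪h, (S * (star b * (T * (star a * c) * star T) * d) * star S) k⟫_ℂ := by
  rw [← adjoint_inner_right, ← star_eq_adjoint, ← mul_apply_eq_comp]
  simp only [star_mul, star_star, mul_assoc]

theorem stronglyCommuteOn_univ_conj {S T : H →L[ℂ] H} (hST : Commute S T) :
    StronglyCommuteOn Set.univ (fun a => S * a * star S) (fun a => T * a * star T) := by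
  set p := span ℂ (sandwichSet (star T) (star S))
  have hp : p = span ℂ (sandwichSet (star S) (star T)) := by rw [sandwichSet_comm]
  have : CompleteSpace p := (isClosed_span_sandwichSet _ _).completeSpace_coe
  let ι₁ a b h : p := ⟨(a * star T * b * star S) h, subset_span ⟨a, b, h, rfl⟩⟩
  let ι₂ a b h : p := ⟨(a * star S * b * star T) h, hp ▸ subset_span ⟨a, b, h, rfl⟩⟩
  let L (c : H →L[ℂ] H) : p →L[ℂ] p := c.restrict fun _ => apply_mem_span_sandwichSet c
  refine ⟨p, inferInstance, inferInstance, inferInstance, p, inferInstance, inferInstance,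
    inferInstance, ι₁, ι₂, .refl ℂ p, L, L,
    fun a _ b _ c _ d _ h k => inner_mul_star_mul_star_apply S T a b c d h k,
    fun a _ b _ c _ d _ h k => inner_mul_star_mul_star_apply T S a b c d h k, ?_, ?_,
    fun a _ h => ?_, fun c _ a _ b _ h => ?_, fun c _ a _ b _ h => ?_,
    fun d hd a _ b _ h => ?_, fun d hd a _ b _ h => ?_⟩
  · simp only [Set.mem_univ, true_and]
    exact dense_span_of_eq_span_sandwichSet rfl ι₁ fun _ _ _ => rfl
  · simp only [Set.mem_univ, true_and]
    exact dense_span_of_eq_span_sandwichSet hp ι₂ fun _ _ _ => rfl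
  · exact Subtype.ext (by simp [ι₁, ι₂, mul_assoc, hST.star_star.eq])
  · exact Subtype.ext (by simp [L, ι₂, mul_assoc])
  · exact Subtype.ext (by simp [L, ι₁, mul_assoc])
  · have hdm := DFunLike.congr_fun (hd (a * star S * b * star T) trivial) h
    exact Subtype.ext (by simpa [L, ι₂] using hdm.symm)
  · have hdm := DFunLike.congr_fun (hd (a * star T * b * star S) trivial) h
    exact Subtype.ext (by simpa [L, ι₁] using hdm)

end Hilbert

end ContinuousLinearMap

theorem conjugation_semigroups_strongly_commute_general
    {H : Type u} [NormedAddCommGroup H] [InnerProductSpace ℂ H] [CompleteSpace H]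
    (T₁ T₂ : ℝ → H →L[ℂ] H)
    (hcomm : ∀ s, 0 ≤ s → ∀ t, 0 ≤ t → T₁ s * T₂ t = T₂ t * T₁ s) :
    ∀ s, 0 ≤ s → ∀ t, 0 ≤ t →
      StronglyCommuteOn (Set.univ : Set (H →L[ℂ] H))
        (fun a => T₁ s * a * star (T₁ s)) (fun a => T₂ t * a * star (T₂ t)) :=
  fun s hs t ht => ContinuousLinearMap.stronglyCommuteOn_univ_conj (hcomm s hs t ht)

theorem conjugation_semigroups_strongly_commute
    {H : Type u} [NormedAddCommGroup H] [InnerProductSpace ℂ H] [CompleteSpace H]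
    (T₁ T₂ : ℝ → H →L[ℂ] H)
    (hc₁ : ∀ t, 0 ≤ t → ‖T₁ t‖ ≤ 1) (hc₂ : ∀ t, 0 ≤ t → ‖T₂ t‖ ≤ 1)
    (hsem₁ : ∀ s, 0 ≤ s → ∀ t, 0 ≤ t → T₁ (s + t) = T₁ s * T₁ t)
    (hsem₂ : ∀ s, 0 ≤ s → ∀ t, 0 ≤ t → T₂ (s + t) = T₂ s * T₂ t)
    (h0₁ : T₁ 0 = 1) (h0₂ : T₂ 0 = 1)
    (hcont₁ : ∀ h : H, ContinuousOn (fun t => T₁ t h) (Set.Ici (0 : ℝ)))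
    (hcont₂ : ∀ h : H, ContinuousOn (fun t => T₂ t h) (Set.Ici (0 : ℝ)))
    (hcomm : ∀ s, 0 ≤ s → ∀ t, 0 ≤ t → T₁ s * T₂ t = T₂ t * T₁ s) :
    ∀ s, 0 ≤ s → ∀ t, 0 ≤ t →
      StronglyCommuteOn (Set.univ : Set (H →L[ℂ] H))
        (fun a => T₁ s * a * star (T₁ s)) (fun a => T₂ t * a * star (T₂ t)) :=
  conjugation_semigroups_strongly_commute_general T₁ T₂ hcomm
end

section
/- Let M ⊆ B(H) be a von Neumann algebra and let α and β be normal *-endomorphisms of M with α ∘ β = β ∘ α. Then α and β commute strongly. -/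
/- STATEMENT 6: if `α` and `β` are commuting normal *-endomorphisms of a von Neumann
algebra `M ⊆ B(H)`, then `α` and `β` commute strongly.  Normality of a map on `M` is
expressed by the fact that it pulls back normal functionals (those of the form
`x ↦ ∑ₙ ⟪hₙ, x gₙ⟫` with `∑ ‖hₙ‖‖gₙ‖ < ∞`) to normal functionals. -/

open scoped InnerProductSpace ComplexOrder

universe u

/-- The map `α` (on the von Neumann algebra with underlying set `M ⊆ B(H)`) is normal:
the composition of every normal functional with `α` is again normal on `M`. -/
def IsNormalOn {H : Type u} [NormedAddCommGroup H] [InnerProductSpace ℂ H] [CompleteSpace H]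
    (M : Set (H →L[ℂ] H)) (α : (H →L[ℂ] H) → (H →L[ℂ] H)) : Prop :=
  ∀ h g : ℕ → H, Summable (fun n => ‖h n‖ * ‖g n‖) →
    ∃ h' g' : ℕ → H, Summable (fun n => ‖h' n‖ * ‖g' n‖) ∧
      ∀ a ∈ M, ∑' n, ⟪h n, (α a) (g n)⟫_ℂ = ∑' n, ⟪h' n, a (g' n)⟫_ℂ

/-! Since `α` and `β` are multiplicative and `*`-preserving on `M`, the semi-inner product of
`M ⊗_β M ⊗_α H` is `⟨a ⊗ b ⊗ h, c ⊗ d ⊗ k⟩ = ⟨αβ(a) α(b) h, αβ(c) α(d) k⟩`, so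
`a ⊗ b ⊗ h ↦ αβ(a) α(b) h` realizes that space inside `H`, as the closed span `E` of the ranges
of the operators `αβ(a)`. Symmetrically `a ⊗ b ⊗ h ↦ βα(a) β(b) h` realizes `M ⊗_α M ⊗_β H`, and
as `αβ = βα` on `M` its image is the same `E` (the possibly non-unital `α(1)`, `β(1)` act as the
identity there). The unitary `u` is the identity of `E`, `c ⊗ I ⊗ I` is the compression of
`αβ(c)` to `E`, and `I ⊗ I ⊗ d` that of `d`. -/

section StarMulHom

variable {A : Type*} [Monoid A] [Star A]

structure IsStarMulHomOn (M : Set A) (α : A → A) : Prop where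
  mapsTo : Set.MapsTo α M M
  map_mul : ∀ a ∈ M, ∀ b ∈ M, α (a * b) = α a * α b
  map_star : ∀ a ∈ M, α (star a) = star (α a)

lemma IsStarMulHomOn.mul_map_one {M : Set A} {α : A → A} (hα : IsStarMulHomOn M α)
    (h1 : (1 : A) ∈ M) {a : A} (ha : a ∈ M) :
    α a * α 1 = α a := by
  rw [← hα.map_mul a ha 1 h1, mul_one]

end StarMulHom

lemma Submodule.dense_span_of_le_topologicalClosure_span {R E : Type*} [Semiring R]
    [AddCommMonoid E] [Module R E] [TopologicalSpace E] [ContinuousAdd E]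
    [ContinuousConstSMul R E] {K : Submodule R E} {g : Set E}
    (hK : K ≤ (Submodule.span R g).topologicalClosure) {s : Set K} (hg : g ⊆ (↑) '' s) :
    Dense (Submodule.span R s : Set K) := by
  intro x
  rw [closure_subtype]
  have hspan : Submodule.span R g ≤ (Submodule.span R s).map K.subtype :=
    Submodule.span_le.2 (hg.trans (Set.image_mono Submodule.subset_span))
  exact closure_mono hspan (hK x.2)

section Compression

variable {𝕜 E : Type*} [RCLike 𝕜] [NormedAddCommGroup E] [InnerProductSpace 𝕜 E]
  (K : Submodule 𝕜 E) [K.HasOrthogonalProjection]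

noncomputable def Submodule.compress (f : E →L[𝕜] E) : K →L[𝕜] K :=
  K.orthogonalProjectionOnto ∘L f ∘L K.subtypeL

variable {K}

lemma Submodule.coe_orthogonalProjectionOnto_of_mem {x : E} (hx : x ∈ K) :
    (K.orthogonalProjectionOnto x : E) = x :=
  starProjection_eq_self_iff.mpr hx

lemma Submodule.compress_orthogonalProjectionOnto_of_mem (f : E →L[𝕜] E) {x : E} (hx : x ∈ K) :
    K.compress f (K.orthogonalProjectionOnto x) = K.orthogonalProjectionOnto (f x) := by
  simp only [compress, ContinuousLinearMap.comp_apply, Submodule.subtypeL_apply,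
    coe_orthogonalProjectionOnto_of_mem hx]

end Compression

lemma ContinuousLinearMap.apply_apply_comm_of_mem_centralizer {R V : Type*} [Semiring R]
    [TopologicalSpace V] [AddCommMonoid V] [Module R V] {M : Set (V →L[R] V)}
    {d x y : V →L[R] V} (hd : d ∈ Set.centralizer M) (hx : x ∈ M) (hy : y ∈ M) (v : V) :
    d (x (y v)) = x (y (d v)) :=
  congr($((Commute.mul_right (hd x hx).symm (hd y hy).symm).eq) v)

section TensorEmbedding

variable {H : Type*} [NormedAddCommGroup H] [InnerProductSpace ℂ H]

/-- The vector of `K` modelling `a ⊗ b ⊗ h ∈ M ⊗_Φ M ⊗_Θ H`. -/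
noncomputable def tensorEmbedding (K : Submodule ℂ H) [K.HasOrthogonalProjection]
    (Θ Φ : (H →L[ℂ] H) → (H →L[ℂ] H)) (a b : H →L[ℂ] H) (h : H) : K :=
  K.orthogonalProjectionOnto (Θ (Φ a) (Θ b h))

variable {S : Type*} [SetLike S (H →L[ℂ] H)] {M : S} {Θ Φ : (H →L[ℂ] H) → (H →L[ℂ] H)}
  {K : Submodule ℂ H} [K.HasOrthogonalProjection]

lemma coe_tensorEmbedding (hK : ∀ a ∈ M, ∀ x, Θ (Φ a) x ∈ K) {a : H →L[ℂ] H} (ha : a ∈ M)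
    (b : H →L[ℂ] H) (h : H) :
    (tensorEmbedding K Θ Φ a b h : H) = Θ (Φ a) (Θ b h) :=
  Submodule.coe_orthogonalProjectionOnto_of_mem (hK a ha _)

variable [CompleteSpace H]

lemma inner_tensorEmbedding [MulMemClass S (H →L[ℂ] H)]
    [StarMemClass S (H →L[ℂ] H)] (hΘ : IsStarMulHomOn (M : Set (H →L[ℂ] H)) Θ)
    (hΦ : IsStarMulHomOn (M : Set (H →L[ℂ] H)) Φ) (hK : ∀ a ∈ M, ∀ x, Θ (Φ a) x ∈ K)
    {a : H →L[ℂ] H} (ha : a ∈ M) {b : H →L[ℂ] H} (hb : b ∈ M) {c : H →L[ℂ] H} (hc : c ∈ M)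
    {d : H →L[ℂ] H} (hd : d ∈ M) (h k : H) :
    ⟪tensorEmbedding K Θ Φ a b h, tensorEmbedding K Θ Φ c d k⟫_ℂ
      = ⟪h, Θ (star b * Φ (star a * c) * d) k⟫_ℂ := by
  have hΦac : Φ (star a * c) ∈ M := hΦ.mapsTo (mul_mem (star_mem ha) hc)
  have hexpand : Θ (star b * Φ (star a * c) * d)
      = star (Θ b) * (star (Θ (Φ a)) * Θ (Φ c)) * Θ d := by
    rw [hΘ.map_mul _ (mul_mem (star_mem hb) hΦac) d hd, hΘ.map_mul _ (star_mem hb) _ hΦac,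
      hΘ.map_star b hb, hΦ.map_mul _ (star_mem ha) c hc, hΦ.map_star a ha,
      hΘ.map_mul _ (star_mem (hΦ.mapsTo ha)) _ (hΦ.mapsTo hc), hΘ.map_star _ (hΦ.mapsTo ha)]
  rw [Submodule.coe_inner, coe_tensorEmbedding hK ha, coe_tensorEmbedding hK hc, hexpand]
  simp only [mul_apply_eq_comp, ContinuousLinearMap.star_eq_adjoint,
    ContinuousLinearMap.adjoint_inner_right]

lemma tensorEmbedding_one [OneMemClass S (H →L[ℂ] H)]
    (hΘ : IsStarMulHomOn (M : Set (H →L[ℂ] H)) Θ) (hΦ : IsStarMulHomOn (M : Set (H →L[ℂ] H)) Φ)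
    {a : H →L[ℂ] H} (ha : a ∈ M) (h : H) :
    tensorEmbedding K Θ Φ a 1 h = K.orthogonalProjectionOnto (Θ (Φ a) h) :=
  congr_arg K.orthogonalProjectionOnto
    congr($(hΘ.mul_map_one (one_mem M) (hΦ.mapsTo ha)) h)

lemma dense_span_tensorEmbedding [OneMemClass S (H →L[ℂ] H)] {g : Set H}
    (hΘ : IsStarMulHomOn (M : Set (H →L[ℂ] H)) Θ) (hΦ : IsStarMulHomOn (M : Set (H →L[ℂ] H)) Φ)
    (hK : ∀ a ∈ M, ∀ x, Θ (Φ a) x ∈ K) (hKg : K ≤ (Submodule.span ℂ g).topologicalClosure)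
    (hg : ∀ x ∈ g, ∃ a ∈ M, ∃ y, x = Θ (Φ a) y) :
    Dense (Submodule.span ℂ {w | ∃ a ∈ M, ∃ b ∈ M, ∃ h : H, w = tensorEmbedding K Θ Φ a b h} :
      Set K) := by
  refine Submodule.dense_span_of_le_topologicalClosure_span hKg fun x hx => ?_
  obtain ⟨a, ha, y, rfl⟩ := hg x hx
  refine ⟨_, ⟨a, ha, 1, one_mem M, y, rfl⟩, ?_⟩
  rw [tensorEmbedding_one hΘ hΦ ha, Submodule.coe_orthogonalProjectionOnto_of_mem (hK a ha y)]

lemma compress_tensorEmbedding (hΘ : IsStarMulHomOn (M : Set (H →L[ℂ] H)) Θ)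
    (hΦ : IsStarMulHomOn (M : Set (H →L[ℂ] H)) Φ) (hK : ∀ a ∈ M, ∀ x, Θ (Φ a) x ∈ K)
    {c : H →L[ℂ] H} (hc : c ∈ M) {a : H →L[ℂ] H} (ha : a ∈ M) (b : H →L[ℂ] H) (h : H) :
    K.compress (Θ (Φ c)) (tensorEmbedding K Θ Φ a b h) = tensorEmbedding K Θ Φ (c * a) b h := by
  rw [tensorEmbedding, Submodule.compress_orthogonalProjectionOnto_of_mem _ (hK a ha _),
    tensorEmbedding, hΦ.map_mul c hc a ha, hΘ.map_mul _ (hΦ.mapsTo hc) _ (hΦ.mapsTo ha)]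
  rfl

lemma compress_tensorEmbedding_of_mem_centralizer
    (hΘ : IsStarMulHomOn (M : Set (H →L[ℂ] H)) Θ) (hΦ : IsStarMulHomOn (M : Set (H →L[ℂ] H)) Φ)
    (hK : ∀ a ∈ M, ∀ x, Θ (Φ a) x ∈ K) {d : H →L[ℂ] H}
    (hd : d ∈ Set.centralizer (M : Set (H →L[ℂ] H))) {a : H →L[ℂ] H} (ha : a ∈ M)
    {b : H →L[ℂ] H} (hb : b ∈ M) (h : H) :
    K.compress d (tensorEmbedding K Θ Φ a b h) = tensorEmbedding K Θ Φ a b (d h) := by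
  rw [tensorEmbedding, Submodule.compress_orthogonalProjectionOnto_of_mem _ (hK a ha _),
    d.apply_apply_comm_of_mem_centralizer hd (hΘ.mapsTo (hΦ.mapsTo ha)) (hΘ.mapsTo hb)]
  rfl

end TensorEmbedding

theorem commuting_normal_endomorphisms_strongly_commute_general
    {H : Type u} [NormedAddCommGroup H] [InnerProductSpace ℂ H] [CompleteSpace H]
    (M : VonNeumannAlgebra H)
    (α β : (H →L[ℂ] H) → (H →L[ℂ] H))
    (hαM : ∀ a ∈ M, α a ∈ M) (hβM : ∀ a ∈ M, β a ∈ M)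
    (hαmul : ∀ a ∈ M, ∀ b ∈ M, α (a * b) = α a * α b)
    (hβmul : ∀ a ∈ M, ∀ b ∈ M, β (a * b) = β a * β b)
    (hαstar : ∀ a ∈ M, α (star a) = star (α a))
    (hβstar : ∀ a ∈ M, β (star a) = star (β a))
    (hcomm : ∀ a ∈ M, α (β a) = β (α a)) :
    StronglyCommuteOn (M : Set (H →L[ℂ] H)) α β := by
  have hα : IsStarMulHomOn (M : Set (H →L[ℂ] H)) α := ⟨fun a ha => hαM a ha, hαmul, hαstar⟩
  have hβ : IsStarMulHomOn (M : Set (H →L[ℂ] H)) β := ⟨fun a ha => hβM a ha, hβmul, hβstar⟩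
  set g : Set H := {x | ∃ a ∈ M, ∃ y, x = α (β a) y}
  set E := (Submodule.span ℂ g).topologicalClosure
  have : CompleteSpace E := (Submodule.isClosed_topologicalClosure _).completeSpace_coe
  have hαβE : ∀ a ∈ M, ∀ x, α (β a) x ∈ E := fun a ha x =>
    Submodule.le_topologicalClosure _ (Submodule.subset_span ⟨a, ha, x, rfl⟩)
  have hβαE : ∀ a ∈ M, ∀ x, β (α a) x ∈ E := fun a ha x => hcomm a ha ▸ hαβE a ha x
  have hgβα : ∀ x ∈ g, ∃ a ∈ M, ∃ y, x = β (α a) y := by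
    rintro _ ⟨a, ha, y, rfl⟩
    exact ⟨a, ha, y, by rw [hcomm a ha]⟩
  refine ⟨E, inferInstance, inferInstance, inferInstance, E, inferInstance, inferInstance,
    inferInstance, tensorEmbedding E α β, tensorEmbedding E β α, LinearIsometryEquiv.refl ℂ E,
    fun c => E.compress (β (α c)), fun d => E.compress d,
    fun a ha b hb c hc d hd => inner_tensorEmbedding hα hβ hαβE ha hb hc hd,
    fun a ha b hb c hc d hd => inner_tensorEmbedding hβ hα hβαE ha hb hc hd,
    dense_span_tensorEmbedding hα hβ hαβE le_rfl fun x hx => hx,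
    dense_span_tensorEmbedding hβ hα hβαE le_rfl hgβα, fun a ha h => ?_,
    fun c hc a ha b _ h => compress_tensorEmbedding hβ hα hβαE hc ha b h,
    fun c hc a ha b _ h => ?_,
    fun d hd a ha b hb h => compress_tensorEmbedding_of_mem_centralizer hβ hα hβαE hd ha hb h,
    fun d hd a ha b hb h =>
      (compress_tensorEmbedding_of_mem_centralizer hα hβ hαβE hd ha hb h).symm⟩
  · rw [LinearIsometryEquiv.coe_refl, id, tensorEmbedding_one hα hβ ha,
      tensorEmbedding_one hβ hα ha, hcomm a ha]
  · simp only [LinearIsometryEquiv.coe_refl, id, ← hcomm c hc]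
    exact (compress_tensorEmbedding hα hβ hαβE hc ha b h).symm

theorem commuting_normal_endomorphisms_strongly_commute
    {H : Type u} [NormedAddCommGroup H] [InnerProductSpace ℂ H] [CompleteSpace H]
    (M : VonNeumannAlgebra H)
    (α β : (H →L[ℂ] H) → (H →L[ℂ] H))
    (hαM : ∀ a ∈ M, α a ∈ M) (hβM : ∀ a ∈ M, β a ∈ M)
    (hαadd : ∀ a ∈ M, ∀ b ∈ M, α (a + b) = α a + α b)
    (hβadd : ∀ a ∈ M, ∀ b ∈ M, β (a + b) = β a + β b)
    (hαsmul : ∀ (c : ℂ), ∀ a ∈ M, α (c • a) = c • α a)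
    (hβsmul : ∀ (c : ℂ), ∀ a ∈ M, β (c • a) = c • β a)
    (hαmul : ∀ a ∈ M, ∀ b ∈ M, α (a * b) = α a * α b)
    (hβmul : ∀ a ∈ M, ∀ b ∈ M, β (a * b) = β a * β b)
    (hαstar : ∀ a ∈ M, α (star a) = star (α a))
    (hβstar : ∀ a ∈ M, β (star a) = star (β a))
    (hαnormal : IsNormalOn (M : Set (H →L[ℂ] H)) α)
    (hβnormal : IsNormalOn (M : Set (H →L[ℂ] H)) β)
    (hcomm : ∀ a ∈ M, α (β a) = β (α a)) :
    StronglyCommuteOn (M : Set (H →L[ℂ] H)) α β :=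
  commuting_normal_endomorphisms_strongly_commute_general M α β hαM hβM hαmul hβmul hαstar hβstar
    hcomm
end

section
/- Let H = ℓ²(ℕ) with standard orthonormal basis (e_n)_{n∈ℕ}, let S ∈ B(H) be the right shift (S e_n = e_{n+1}), let Θ : B(H) → B(H) be the map sending an operator to its diagonal part (i.e. ⟨e_i, Θ(A) e_j⟩ = δ_{ij} ⟨e_i, A e_i⟩ for all i,j), and let Φ(A) = S A S*. Then Θ is a unital CP map, Φ is a normal *-endomorphism, Θ ∘ Φ = Φ ∘ Θ, but Θ and Φ do not commute strongly. -/
/-!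
The diagonal map is given coordinatewise, `⟪e_k, Θ(A) x⟫ = ⟪e_k, A e_k⟫ ⟪e_k, x⟫`, from which it is
unital, contractive, completely positive and normal; `Φ` is conjugation by the isometry `S`, and
`S` commutes with taking diagonals because `S* e₀ = 0` and `S* e_{n+1} = e_n`.

Since `Φ` is a `*`-homomorphism, `a ⊗ b ⊗ h = a ⊗ 1 ⊗ Φ(b) h` in `M ⊗_Θ M ⊗_Φ H` (the two vectors
have the same Gram matrix), so the vectors `a ⊗ 1 ⊗ h` are total there. A unitary `u` as in the
definition maps `a ⊗ 1 ⊗ h ∈ M ⊗_Φ M ⊗_Θ H` to these vectors, so it would force them to be total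
in `M ⊗_Φ M ⊗_Θ H` as well. But `1 ⊗ S ⊗ e₀` is a unit vector orthogonal to all of them:
`⟪1 ⊗ S ⊗ e₀, a ⊗ 1 ⊗ h⟫ = ⟪e₀, Θ(a S*) h⟫ = ⟪e₀, a S* e₀⟫ ⟪e₀, h⟫ = 0`.
-/

open scoped InnerProductSpace ComplexOrder

universe u

/-- The map `α` on `B(H)` is normal: the composition of every normal functional with `α`
is again a normal functional. -/
def IsNormalMap {H : Type u} [NormedAddCommGroup H] [InnerProductSpace ℂ H] [CompleteSpace H]
    (α : (H →L[ℂ] H) → (H →L[ℂ] H)) : Prop :=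
  ∀ h g : ℕ → H, Summable (fun n => ‖h n‖ * ‖g n‖) →
    ∃ h' g' : ℕ → H, Summable (fun n => ‖h' n‖ * ‖g' n‖) ∧
      ∀ a : H →L[ℂ] H, ∑' n, ⟪h n, (α a) (g n)⟫_ℂ = ∑' n, ⟪h' n, a (g' n)⟫_ℂ

/-- The map `θ` is completely positive: for every `n`, every `a₁, …, aₙ` and every
`v₁, …, vₙ ∈ H` one has `∑ᵢⱼ ⟪vᵢ, θ(aᵢ* aⱼ) vⱼ⟫ ≥ 0` (this is the standard equivalent form of
positivity of the induced maps on all matrix levels). -/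
def IsCompletelyPositive {H : Type u} [NormedAddCommGroup H] [InnerProductSpace ℂ H]
    [CompleteSpace H] (θ : (H →L[ℂ] H) → (H →L[ℂ] H)) : Prop :=
  ∀ (n : ℕ) (a : Fin n → (H →L[ℂ] H)) (v : Fin n → H),
    0 ≤ ∑ i, ∑ j, ⟪v i, (θ (star (a i) * a j)) (v j)⟫_ℂ

local notation "H₂" => lp (fun _ : ℕ => ℂ) 2

section Conjugation

variable {R : Type*} [Monoid R] [StarMul R]

lemma star_mul_mul_star (V A : R) : star (V * A * star V) = V * star A * star V := by
  simp only [star_mul, star_star, mul_assoc]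

lemma mul_mul_star_mul_mul_mul_star {V : R} (hV : star V * V = 1) (A B : R) :
    V * A * star V * (V * B * star V) = V * (A * B) * star V := by
  simp only [mul_assoc]
  rw [← mul_assoc (star V), hV, one_mul]

end Conjugation

section Operators

variable {H : Type u} [NormedAddCommGroup H] [InnerProductSpace ℂ H] [CompleteSpace H]

lemma inner_star_mul_apply (T X : H →L[ℂ] H) (x y : H) :
    ⟪x, (star T * X) y⟫_ℂ = ⟪T x, X y⟫_ℂ := by
  rw [mul_apply_eq_comp, ContinuousLinearMap.star_eq_adjoint,
    ContinuousLinearMap.adjoint_inner_right]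

lemma inner_mul_mul_star_apply (T X : H →L[ℂ] H) (x y : H) :
    ⟪x, (T * X * star T) y⟫_ℂ = ⟪star T x, X (star T y)⟫_ℂ := by
  rw [mul_apply_eq_comp, mul_apply_eq_comp, ContinuousLinearMap.star_eq_adjoint,
    ContinuousLinearMap.adjoint_inner_left]

lemma isNormalMap_of_countable {κ : Type*} [Countable κ] {α : (H →L[ℂ] H) → (H →L[ℂ] H)}
    (hα : ∀ h g : ℕ → H, Summable (fun n => ‖h n‖ * ‖g n‖) →
      ∃ x y : κ → H, Summable (fun p => ‖x p‖ * ‖y p‖) ∧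
        ∀ a : H →L[ℂ] H, ∑' n, ⟪h n, (α a) (g n)⟫_ℂ = ∑' p, ⟪x p, a (y p)⟫_ℂ) :
    IsNormalMap α := by
  intro h g hhg
  obtain ⟨x, y, hxy, hα⟩ := hα h g hhg
  obtain ⟨f, hf⟩ := Countable.exists_injective_nat κ
  have hx : ∀ n ∉ Set.range f, Function.extend f x 0 n = 0 := fun n hn =>
    Function.extend_apply' _ _ _ hn
  refine ⟨Function.extend f x 0, Function.extend f y 0, ?_, fun a => ?_⟩
  · refine (hf.summable_iff fun n hn => by simp [hx n hn]).mp ?_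
    simpa only [Function.comp_def, hf.extend_apply] using hxy
  · rw [hα, ← hf.tsum_eq]
    · simp only [hf.extend_apply]
    · intro n hn
      by_contra hn'
      exact hn (by simp [hx n hn'])

lemma isNormalMap_mul_mul_star (V : H →L[ℂ] H) : IsNormalMap fun A => V * A * star V := by
  intro h g hhg
  refine ⟨fun n => star V (h n), fun n => star V (g n), ?_, fun a => ?_⟩
  · refine .of_nonneg_of_le (fun n => by positivity) (fun n => ?_) (hhg.mul_left (‖star V‖ ^ 2))
    calc ‖star V (h n)‖ * ‖star V (g n)‖ ≤ (‖star V‖ * ‖h n‖) * (‖star V‖ * ‖g n‖) := by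
          gcongr <;> exact (star V).le_opNorm _
      _ = ‖star V‖ ^ 2 * (‖h n‖ * ‖g n‖) := by ring
  · simp only [inner_mul_mul_star_apply]

end Operators

section StrongCommutation

variable {H : Type u} [NormedAddCommGroup H] [InnerProductSpace ℂ H] [CompleteSpace H]
  {M : Set (H →L[ℂ] H)} {Θ Φ : (H →L[ℂ] H) → (H →L[ℂ] H)}

lemma eq_of_inner_eq_inner {W : Type*} [NormedAddCommGroup W] [InnerProductSpace ℂ W] {x y : W}
    (hx : ⟪x, x⟫_ℂ = ⟪y, x⟫_ℂ) (hy : ⟪x, y⟫_ℂ = ⟪y, y⟫_ℂ) : x = y := by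
  rw [← sub_eq_zero, ← inner_self_eq_zero (𝕜 := ℂ)]
  simp only [inner_sub_left, inner_sub_right, hx, hy, sub_self]

lemma apply_eq_apply_one_of_map_mul_of_map_star {W : Type*} [NormedAddCommGroup W]
    [InnerProductSpace ℂ W]
    (hΦmul : ∀ A B, Φ (A * B) = Φ A * Φ B) (hΦstar : ∀ A, Φ (star A) = star (Φ A))
    (hM : 1 ∈ M) (ι : (H →L[ℂ] H) → (H →L[ℂ] H) → H → W)
    (hι : ∀ a ∈ M, ∀ b ∈ M, ∀ c ∈ M, ∀ d ∈ M, ∀ (h k : H),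
        ⟪ι a b h, ι c d k⟫_ℂ = ⟪h, (Φ (star b * Θ (star a * c) * d)) k⟫_ℂ)
    {a b : H →L[ℂ] H} (ha : a ∈ M) (hb : b ∈ M) (h : H) : ι a b h = ι a 1 (Φ b h) := by
  set X := Φ (Θ (star a * a))
  have h₁ : ⟪ι a b h, ι a b h⟫_ℂ = ⟪Φ b h, X (Φ b h)⟫_ℂ := by
    rw [hι a ha b hb a ha b hb, hΦmul, hΦmul, hΦstar, mul_assoc, inner_star_mul_apply]; rfl
  have h₂ : ⟪ι a 1 (Φ b h), ι a b h⟫_ℂ = ⟪Φ b h, X (Φ b h)⟫_ℂ := by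
    rw [hι a ha 1 hM a ha b hb, star_one, one_mul, hΦmul]; rfl
  have h₃ : ⟪ι a b h, ι a 1 (Φ b h)⟫_ℂ = ⟪Φ b h, X (Φ b h)⟫_ℂ := by
    rw [hι a ha b hb a ha 1 hM, mul_one, hΦmul, hΦstar, ← mul_apply_eq_comp,
      mul_assoc, inner_star_mul_apply]; rfl
  have h₄ : ⟪ι a 1 (Φ b h), ι a 1 (Φ b h)⟫_ℂ = ⟪Φ b h, X (Φ b h)⟫_ℂ := by
    rw [hι a ha 1 hM a ha 1 hM, star_one, one_mul, mul_one]
  exact eq_of_inner_eq_inner (h₁.trans h₂.symm) (h₃.trans h₄.symm)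

theorem not_stronglyCommuteOn_of_orthogonal
    (hΦmul : ∀ A B, Φ (A * B) = Φ A * Φ B) (hΦstar : ∀ A, Φ (star A) = star (Φ A))
    (hM : 1 ∈ M) {c : H →L[ℂ] H} (hc : c ∈ M) (h : H)
    (hnorm : ⟪h, Θ (star c * Φ 1 * c) h⟫_ℂ ≠ 0)
    (horth : ∀ a ∈ M, ∀ k, ⟪h, Θ (star c * Φ a) k⟫_ℂ = 0) :
    ¬ StronglyCommuteOn M Θ Φ := by
  rintro ⟨W₁, _, _, _, W₂, _, _, _, ι₁, ι₂, u, -, -, hι₁, hι₂, -, hd₂, hu₁, -⟩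
  set v := ι₁ 1 c h
  have hgen : ∀ a ∈ M, ∀ b ∈ M, ∀ k, ⟪u v, ι₂ a b k⟫_ℂ = 0 := by
    intro a ha b hb k
    rw [apply_eq_apply_one_of_map_mul_of_map_star hΦmul hΦstar hM ι₂ hι₂ ha hb, ← hu₁ a ha,
      LinearIsometryEquiv.inner_map_map, hι₁ 1 hM c hc a ha 1 hM, star_one, one_mul, mul_one]
    exact horth a ha _
  have hv : u v = 0 := by
    refine hd₂.eq_zero_of_inner_left ℂ fun z hz => ?_
    refine (Submodule.span_le (p := LinearMap.ker (innerₛₗ ℂ (u v)))).mpr ?_ hz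
    rintro _ ⟨a, ha, b, hb, k, rfl⟩
    exact hgen a ha b hb k
  apply hnorm
  have := hι₁ 1 hM c hc 1 hM c hc h h
  rw [star_one, one_mul] at this
  rw [← this, ← LinearIsometryEquiv.inner_map_map u, hv, inner_zero_left]

end StrongCommutation

section HilbertBasis

variable {ι : Type*} {E : Type u} [NormedAddCommGroup E] [InnerProductSpace ℂ E]

lemma HilbertBasis.ext_inner (b : HilbertBasis ι ℂ E) {x y : E}
    (h : ∀ i, ⟪b i, x⟫_ℂ = ⟪b i, y⟫_ℂ) : x = y :=
  b.repr.injective (lp.ext (funext fun i => by simp only [b.repr_apply_apply, h]))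

lemma HilbertBasis.continuousLinearMap_ext (b : HilbertBasis ι ℂ E) {A B : E →L[ℂ] E}
    (h : ∀ i j, ⟪b i, A (b j)⟫_ℂ = ⟪b i, B (b j)⟫_ℂ) : A = B :=
  ContinuousLinearMap.ext_on (Submodule.dense_iff_topologicalClosure_eq_top.mpr b.dense_span)
    (by rintro _ ⟨j, rfl⟩; exact b.ext_inner (h · j))

lemma HilbertBasis.hasSum_norm_sq (b : HilbertBasis ι ℂ E) (x : E) :
    HasSum (fun i => ‖⟪b i, x⟫_ℂ‖ ^ 2) (‖x‖ ^ 2) := by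
  have := b.hasSum_inner_mul_inner x x
  simp only [← inner_conj_symm x (b _), RCLike.conj_mul, inner_self_eq_norm_sq_to_K] at this
  exact_mod_cast this

lemma HilbertBasis.norm_inner_apply_le (b : HilbertBasis ι ℂ E) (A : E →L[ℂ] E) (i : ι) :
    ‖⟪b i, A (b i)⟫_ℂ‖ ≤ ‖A‖ :=
  calc ‖⟪b i, A (b i)⟫_ℂ‖ ≤ ‖b i‖ * (‖A‖ * ‖b i‖) :=
        (norm_inner_le_norm _ _).trans (by gcongr; exact A.le_opNorm _)
    _ = ‖A‖ := by rw [b.orthonormal.1 i, one_mul, mul_one]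

lemma HilbertBasis.tsum_norm_inner_mul_norm_inner_le (b : HilbertBasis ι ℂ E) (x y : E) :
    Summable (fun i => ‖⟪b i, x⟫_ℂ‖ * ‖⟪b i, y⟫_ℂ‖) ∧
      ∑' i, ‖⟪b i, x⟫_ℂ‖ * ‖⟪b i, y⟫_ℂ‖ ≤ ‖x‖ * ‖y‖ := by
  have := lp.tsum_mul_le_mul_norm (by simpa using Real.HolderConjugate.two_two)
    (b.repr x) (b.repr y)
  simpa only [b.repr_apply_apply, LinearIsometryEquiv.norm_map] using this

end HilbertBasis

section Diagonal

variable {ι : Type*} [DecidableEq ι] {E : Type u} [NormedAddCommGroup E] [InnerProductSpace ℂ E]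

def IsDiagonalPart (b : HilbertBasis ι ℂ E) (Θ : (E →L[ℂ] E) → (E →L[ℂ] E)) : Prop :=
  ∀ A i j, ⟪b i, Θ A (b j)⟫_ℂ = if i = j then ⟪b i, A (b i)⟫_ℂ else 0

namespace IsDiagonalPart

variable {b : HilbertBasis ι ℂ E} {Θ : (E →L[ℂ] E) → (E →L[ℂ] E)}

lemma inner_basis_apply (hΘ : IsDiagonalPart b Θ) (A : E →L[ℂ] E) (i : ι) (x : E) :
    ⟪b i, Θ A x⟫_ℂ = ⟪b i, A (b i)⟫_ℂ * ⟪b i, x⟫_ℂ := by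
  have := (b.hasSum_repr x).mapL ((innerSL ℂ (b i)).comp (Θ A))
  simp only [ContinuousLinearMap.comp_apply, innerSL_apply_apply, map_smul, hΘ A i] at this
  rw [this.unique (hasSum_single i fun j hj => by simp [Ne.symm hj]), if_pos rfl, smul_eq_mul,
    b.repr_apply_apply, mul_comm]

lemma hasSum_inner (hΘ : IsDiagonalPart b Θ) (A : E →L[ℂ] E) (x y : E) :
    HasSum (fun i => ⟪x, b i⟫_ℂ * (⟪b i, A (b i)⟫_ℂ * ⟪b i, y⟫_ℂ)) ⟪x, Θ A y⟫_ℂ := by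
  simpa only [hΘ.inner_basis_apply] using b.hasSum_inner_mul_inner x (Θ A y)

lemma map_one (hΘ : IsDiagonalPart b Θ) : Θ 1 = 1 :=
  b.continuousLinearMap_ext fun i j => by
    rw [hΘ, one_apply_eq_self, one_apply_eq_self, orthonormal_iff_ite.mp b.orthonormal,
      orthonormal_iff_ite.mp b.orthonormal i j, if_pos rfl]

lemma norm_apply_le (hΘ : IsDiagonalPart b Θ) (A : E →L[ℂ] E) : ‖Θ A‖ ≤ ‖A‖ := by
  refine ContinuousLinearMap.opNorm_le_bound _ (norm_nonneg A) fun x => ?_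
  have hsq : ‖Θ A x‖ ^ 2 ≤ (‖A‖ * ‖x‖) ^ 2 := by
    rw [mul_pow]
    refine hasSum_le (fun i => ?_) (b.hasSum_norm_sq (Θ A x)) ((b.hasSum_norm_sq x).mul_left _)
    rw [hΘ.inner_basis_apply, norm_mul, mul_pow]
    gcongr
    exact b.norm_inner_apply_le A i
  exact (pow_le_pow_iff_left₀ (norm_nonneg _) (by positivity) two_ne_zero).mp hsq

lemma isCompletelyPositive [CompleteSpace E] (hΘ : IsDiagonalPart b Θ) :
    IsCompletelyPositive Θ := by
  intro n a v
  set w : ι → Fin n → E := fun k i => ⟪b k, v i⟫_ℂ • a i (b k)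
  have hterm : ∀ i j, HasSum (fun k => ⟪w k i, w k j⟫_ℂ) ⟪v i, Θ (star (a i) * a j) (v j)⟫_ℂ := by
    intro i j
    convert hΘ.hasSum_inner (star (a i) * a j) (v i) (v j) using 2 with k
    simp only [w, inner_smul_left, inner_smul_right, inner_star_mul_apply, inner_conj_symm]
    ring
  refine (hasSum_sum fun i _ => hasSum_sum fun j _ => hterm i j).nonneg fun k => ?_
  simp only [← inner_sum, ← sum_inner]
  rw [inner_self_eq_norm_sq_to_K]
  positivity

lemma isNormalMap [CompleteSpace E] [Countable ι] (hΘ : IsDiagonalPart b Θ) : IsNormalMap Θ := by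
  refine isNormalMap_of_countable (κ := ℕ × ι) fun h g hhg => ?_
  set F : ℕ × ι → ℝ := fun p => ‖⟪b p.2, h p.1⟫_ℂ‖ * ‖⟪b p.2, g p.1⟫_ℂ‖
  have hrow n := b.tsum_norm_inner_mul_norm_inner_le (h n) (g n)
  have hF : Summable F := (summable_prod_of_nonneg fun _ => by positivity).2
    ⟨fun n => (hrow n).1, .of_nonneg_of_le (fun n => tsum_nonneg fun _ => by positivity)
      (fun n => (hrow n).2) hhg⟩
  refine ⟨fun p => ⟪b p.2, h p.1⟫_ℂ • b p.2, fun p => ⟪b p.2, g p.1⟫_ℂ • b p.2, ?_, fun A => ?_⟩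
  · simpa only [norm_smul, b.orthonormal.1, mul_one] using hF
  set T : ℕ × ι → ℂ := fun p => ⟪h p.1, b p.2⟫_ℂ * (⟪b p.2, A (b p.2)⟫_ℂ * ⟪b p.2, g p.1⟫_ℂ)
  have hT : Summable T := by
    refine (hF.mul_left ‖A‖).of_norm_bounded fun p => ?_
    simp only [T, F, norm_mul, norm_inner_symm (h p.1)]
    have := b.norm_inner_apply_le A p.2
    calc _ = ‖⟪b p.2, A (b p.2)⟫_ℂ‖ * (‖⟪b p.2, h p.1⟫_ℂ‖ * ‖⟪b p.2, g p.1⟫_ℂ‖) := by ring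
      _ ≤ _ := by gcongr
  calc ∑' n, ⟪h n, Θ A (g n)⟫_ℂ = ∑' n, ∑' k, T (n, k) :=
        tsum_congr fun n => (hΘ.hasSum_inner A _ _).tsum_eq.symm
    _ = ∑' p, T p := (hT.tsum_prod' hT.prod_factor).symm
    _ = _ := tsum_congr fun p => by
        simp only [T, map_smul, inner_smul_left, inner_smul_right, inner_conj_symm]
        ring

end IsDiagonalPart

end Diagonal

section Shift

variable {E : Type u} [NormedAddCommGroup E] [InnerProductSpace ℂ E] [CompleteSpace E]
  {b : HilbertBasis ℕ ℂ E} {S : E →L[ℂ] E}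

lemma star_shift_apply_zero (hS : ∀ n, S (b n) = b (n + 1)) : star S (b 0) = 0 :=
  b.ext_inner fun m => by
    rw [inner_zero_right, ContinuousLinearMap.star_eq_adjoint,
      ContinuousLinearMap.adjoint_inner_right, hS, orthonormal_iff_ite.mp b.orthonormal, if_neg]
    omega

lemma star_shift_apply_succ (hS : ∀ n, S (b n) = b (n + 1)) (n : ℕ) : star S (b (n + 1)) = b n :=
  b.ext_inner fun m => by
    rw [ContinuousLinearMap.star_eq_adjoint, ContinuousLinearMap.adjoint_inner_right, hS,
      orthonormal_iff_ite.mp b.orthonormal, orthonormal_iff_ite.mp b.orthonormal m n]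
    simp

lemma star_shift_mul_shift (hS : ∀ n, S (b n) = b (n + 1)) : star S * S = 1 :=
  b.continuousLinearMap_ext fun i j => by
    rw [inner_star_mul_apply, hS, hS, one_apply_eq_self, orthonormal_iff_ite.mp b.orthonormal,
      orthonormal_iff_ite.mp b.orthonormal i j]
    simp

lemma IsDiagonalPart.apply_mul_mul_star_shift {Θ : (E →L[ℂ] E) → (E →L[ℂ] E)}
    (hΘ : IsDiagonalPart b Θ) (hS : ∀ n, S (b n) = b (n + 1)) (A : E →L[ℂ] E) :
    Θ (S * A * star S) = S * Θ A * star S :=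
  b.continuousLinearMap_ext fun i j => by
    rw [hΘ, inner_mul_mul_star_apply, inner_mul_mul_star_apply]
    rcases i with _ | m <;> rcases j with _ | n
    · simp [star_shift_apply_zero hS]
    · simp [star_shift_apply_zero hS]
    · simp [star_shift_apply_zero hS]
    · rw [star_shift_apply_succ hS, star_shift_apply_succ hS, hΘ]
      simp only [Nat.add_right_cancel_iff]

end Shift

theorem diagonal_and_shift_do_not_strongly_commute
    (e : ℕ → H₂) (he : ∀ n, e n = lp.single 2 n (1 : ℂ))
    (Sh : H₂ →L[ℂ] H₂) (hSh : ∀ n, Sh (e n) = e (n + 1))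
    (Θ : (H₂ →L[ℂ] H₂) →ₗ[ℂ] (H₂ →L[ℂ] H₂))
    (hΘ : ∀ (A : H₂ →L[ℂ] H₂) (i j : ℕ),
      ⟪e i, (Θ A) (e j)⟫_ℂ = if i = j then ⟪e i, A (e i)⟫_ℂ else 0)
    (Φ : (H₂ →L[ℂ] H₂) → (H₂ →L[ℂ] H₂)) (hΦ : ∀ A, Φ A = Sh * A * star Sh) :
    -- `Θ` is a unital CP map:
    Θ 1 = 1 ∧ (∀ A, ‖Θ A‖ ≤ ‖A‖) ∧ IsNormalMap (fun A => Θ A) ∧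
      IsCompletelyPositive (fun A => Θ A) ∧
    -- `Φ` is a normal `*`-endomorphism:
    (∀ A B, Φ (A + B) = Φ A + Φ B) ∧ (∀ (c : ℂ) A, Φ (c • A) = c • Φ A) ∧
      (∀ A B, Φ (A * B) = Φ A * Φ B) ∧ (∀ A, Φ (star A) = star (Φ A)) ∧ IsNormalMap Φ ∧
    -- they commute:
    (∀ A, Θ (Φ A) = Φ (Θ A)) ∧
    -- but not strongly:
    ¬ StronglyCommuteOn (Set.univ : Set (H₂ →L[ℂ] H₂)) (fun A => Θ A) Φ := by
  obtain rfl : Φ = fun A => Sh * A * star Sh := funext hΦ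
  set b : HilbertBasis ℕ ℂ H₂ := default
  have hb : ∀ n, b n = e n := fun n => by rw [he, ← b.repr_symm_single]; rfl
  have hΘb : IsDiagonalPart b fun A => Θ A := fun A i j => by simpa only [hb] using hΘ A i j
  have hSb : ∀ n, Sh (b n) = b (n + 1) := by simpa only [← hb] using hSh
  have hSS := star_shift_mul_shift hSb
  have hΦmul A B := (mul_mul_star_mul_mul_mul_star hSS A B).symm
  have hΦstar A := (star_mul_mul_star Sh A).symm
  refine ⟨hΘb.map_one, hΘb.norm_apply_le, hΘb.isNormalMap, hΘb.isCompletelyPositive,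
    fun A B => by simp only [mul_add, add_mul],
    fun c A => by simp only [mul_smul_comm, smul_mul_assoc],
    hΦmul, hΦstar, isNormalMap_mul_mul_star Sh, hΘb.apply_mul_mul_star_shift hSb, ?_⟩
  refine not_stronglyCommuteOn_of_orthogonal hΦmul hΦstar (Set.mem_univ 1) (Set.mem_univ Sh)
    (b 0) ?_ fun a _ k => ?_
  · rw [show star Sh * (Sh * 1 * star Sh) * Sh = 1 by
        rw [mul_one, mul_assoc, mul_assoc, hSS, mul_one, hSS], hΘb.map_one, one_apply_eq_self,
      inner_self_eq_norm_sq_to_K, b.orthonormal.1]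
    norm_num
  · rw [show star Sh * (Sh * a * star Sh) = a * star Sh by
        rw [← mul_assoc, ← mul_assoc, hSS, one_mul], hΘb.inner_basis_apply, mul_apply_eq_comp,
      star_shift_apply_zero hSb, map_zero a, inner_zero_right, zero_mul]
end
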